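/- Let θ, t ∈ ℝ, H = {z ∈ ℂ : Re(z·e^{−iθ}) > t}, z₀ ∈ H, u = Re(z₀·e^{−iθ}) − t, and 0 < r < 1, and set s(r) = log((1+r)/(1−r)). The map T(z) = i·(z·e^{−iθ} − t) is a bijection from H onto the upper half-plane ℍ, and the hyperbolic ball of H of radius s(r) about z₀, namely {w ∈ H : ρ(T(z₀), T(w)) < s(r)}, equals the open Euclidean disk with center z₀ + 2ur²e^{iθ}/(1−r²) and radius 2ur/(1−r²). -/

import Mathlib

/- The map `T` is a rotation followed by a translation, hence a Euclidean
isometry of `ℂ`; it carries `H` onto `ℍ`, with imaginary part `Re (z e^{-iθ}) - t`. In `ℍ` the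
hyperbolic ball of radius `s` about `z` is the Euclidean disk with center `z + i Im z (cosh s - 1)`
and radius `Im z sinh s` (`UpperHalfPlane.image_coe_ball`). Pulling this disk back along the
isometry and using `cosh s(r) = (1 + r²)/(1 - r²)`, `sinh s(r) = 2r/(1 - r²)` gives the claim. -/

open Complex

/-- The hyperbolic distance on the upper half-plane,
`ρ(z,w) = 2·arsinh(|z-w| / (2√(Im z · Im w)))`. -/
noncomputable def hypDist (z w : ℂ) : ℝ :=
  2 * Real.arsinh (‖z - w‖ / (2 * Real.sqrt (z.im * w.im)))

open scoped UpperHalfPlane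
open Metric

lemma hypDist_coe (z w : ℍ) : hypDist z w = dist z w := by
  rw [UpperHalfPlane.dist_eq, hypDist, Complex.dist_eq]
  rfl

lemma UpperHalfPlane.coe_center (z : ℍ) (s : ℝ) :
    (z.center s : ℂ) = z + I * (z.im * (Real.cosh s - 1)) := by
  apply Complex.ext <;> simp [mul_sub]

lemma setOf_im_pos_and_hypDist_lt (z : ℍ) (s : ℝ) :
    {w : ℂ | 0 < w.im ∧ hypDist z w < s} = ball (z.center s : ℂ) (z.im * Real.sinh s) := by
  rw [← UpperHalfPlane.image_coe_ball]
  ext w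
  constructor
  · rintro ⟨hw, hlt⟩
    refine ⟨⟨w, hw⟩, ?_, rfl⟩
    rwa [mem_ball, dist_comm, ← hypDist_coe]
  · rintro ⟨w, hw, rfl⟩
    exact ⟨w.im_pos, by rwa [hypDist_coe, dist_comm]⟩

lemma cosh_log_one_add_div_one_sub {r : ℝ} (h₀ : -1 < r) (h₁ : r < 1) :
    Real.cosh (Real.log ((1 + r) / (1 - r))) = (1 + r ^ 2) / (1 - r ^ 2) := by
  have hp : 1 + r ≠ 0 := by linarith
  have hm : 1 - r ≠ 0 := by linarith
  rw [Real.cosh_log (div_pos (by linarith) (by linarith)),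
    show 1 - r ^ 2 = (1 + r) * (1 - r) by ring]
  field_simp
  ring

lemma sinh_log_one_add_div_one_sub {r : ℝ} (h₀ : -1 < r) (h₁ : r < 1) :
    Real.sinh (Real.log ((1 + r) / (1 - r))) = 2 * r / (1 - r ^ 2) := by
  have hp : 1 + r ≠ 0 := by linarith
  have hm : 1 - r ≠ 0 := by linarith
  rw [Real.sinh_log (div_pos (by linarith) (by linarith)),
    show 1 - r ^ 2 = (1 + r) * (1 - r) by ring]
  field_simp
  ring

noncomputable def halfPlaneToUpperHalfPlane (θ t : ℝ) (z : ℂ) : ℂ :=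
  I * (z * exp (-(θ : ℂ) * I) - t)

section
variable (θ t : ℝ)

@[simp]
lemma im_halfPlaneToUpperHalfPlane (z : ℂ) :
    (halfPlaneToUpperHalfPlane θ t z).im = (z * exp (-(θ : ℂ) * I)).re - t := by
  simp [halfPlaneToUpperHalfPlane]

lemma halfPlaneToUpperHalfPlane_add_mul_exp (z c : ℂ) :
    halfPlaneToUpperHalfPlane θ t (z + c * exp (θ * I)) =
      halfPlaneToUpperHalfPlane θ t z + I * c := by
  have h : exp (θ * I) * exp (-(θ : ℂ) * I) = 1 := by rw [← Complex.exp_add]; simp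
  unfold halfPlaneToUpperHalfPlane
  linear_combination I * c * h

lemma isometry_halfPlaneToUpperHalfPlane : Isometry (halfPlaneToUpperHalfPlane θ t) := by
  refine Isometry.of_dist_eq fun z w => ?_
  have h : halfPlaneToUpperHalfPlane θ t z - halfPlaneToUpperHalfPlane θ t w
      = I * exp ((-θ : ℝ) * I) * (z - w) := by
    unfold halfPlaneToUpperHalfPlane; push_cast; ring
  rw [dist_eq_norm, dist_eq_norm, h, norm_mul, norm_mul, norm_I, norm_exp_ofReal_mul_I, one_mul,
    one_mul]

lemma surjective_halfPlaneToUpperHalfPlane :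
    Function.Surjective (halfPlaneToUpperHalfPlane θ t) :=
  fun w => ⟨0 + (t - I * w) * exp (θ * I), by
    rw [halfPlaneToUpperHalfPlane_add_mul_exp]
    unfold halfPlaneToUpperHalfPlane
    linear_combination (-w) * I_sq⟩

lemma bijOn_halfPlaneToUpperHalfPlane :
    Set.BijOn (halfPlaneToUpperHalfPlane θ t)
      {z : ℂ | t < (z * exp (-(θ : ℂ) * I)).re} {z : ℂ | 0 < z.im} := by
  have hbij : Function.Bijective (halfPlaneToUpperHalfPlane θ t) :=
    ⟨(isometry_halfPlaneToUpperHalfPlane θ t).injective,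
      surjective_halfPlaneToUpperHalfPlane θ t⟩
  convert hbij.bijOn_preimage using 1
  ext z
  simp

lemma setOf_hypDist_halfPlaneToUpperHalfPlane_lt {z₀ : ℂ}
    (hz₀ : t < (z₀ * exp (-(θ : ℂ) * I)).re) (s : ℝ) :
    {w : ℂ | t < (w * exp (-(θ : ℂ) * I)).re ∧
        hypDist (halfPlaneToUpperHalfPlane θ t z₀) (halfPlaneToUpperHalfPlane θ t w) < s} =
      ball
        (z₀ + (((z₀ * exp (-(θ : ℂ) * I)).re - t) * (Real.cosh s - 1) : ℝ) * exp (θ * I))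
        (((z₀ * exp (-(θ : ℂ) * I)).re - t) * Real.sinh s) := by
  set u := (z₀ * exp (-(θ : ℂ) * I)).re - t
  let z : ℍ := ⟨halfPlaneToUpperHalfPlane θ t z₀, by simpa using hz₀⟩
  have hz : z.im = u := im_halfPlaneToUpperHalfPlane θ t z₀
  have hcenter : (z.center s : ℂ) =
      halfPlaneToUpperHalfPlane θ t (z₀ + (u * (Real.cosh s - 1) : ℝ) * exp (θ * I)) := by
    rw [halfPlaneToUpperHalfPlane_add_mul_exp, UpperHalfPlane.coe_center, hz]
    push_cast
    rfl
  calc _ = halfPlaneToUpperHalfPlane θ t ⁻¹' {w | 0 < w.im ∧ hypDist z w < s} := by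
        ext w
        simp [z]
    _ = _ := by
      rw [setOf_im_pos_and_hypDist_lt, hcenter, hz,
        (isometry_halfPlaneToUpperHalfPlane θ t).preimage_ball]
end

theorem stmt8 (θ t : ℝ) (z₀ : ℂ) (r : ℝ) (hr0 : 0 < r) (hr1 : r < 1)
    (hz₀ : t < (z₀ * Complex.exp (-(θ : ℂ) * I)).re) :
    Set.BijOn (fun z : ℂ => I * (z * Complex.exp (-(θ : ℂ) * I) - (t : ℂ)))
      {z : ℂ | t < (z * Complex.exp (-(θ : ℂ) * I)).re} {z : ℂ | 0 < z.im} ∧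
    {w : ℂ | t < (w * Complex.exp (-(θ : ℂ) * I)).re ∧
        hypDist (I * (z₀ * Complex.exp (-(θ : ℂ) * I) - (t : ℂ)))
            (I * (w * Complex.exp (-(θ : ℂ) * I) - (t : ℂ)))
          < Real.log ((1 + r) / (1 - r))} =
      Metric.ball
        (z₀ + 2 * (((z₀ * Complex.exp (-(θ : ℂ) * I)).re - t : ℝ) : ℂ) * (r : ℂ) ^ 2
            * Complex.exp ((θ : ℂ) * I) / (1 - (r : ℂ) ^ 2))
        (2 * ((z₀ * Complex.exp (-(θ : ℂ) * I)).re - t) * r / (1 - r ^ 2)) := by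
  refine ⟨bijOn_halfPlaneToUpperHalfPlane θ t, ?_⟩
  have hr : -1 < r := by linarith
  refine (setOf_hypDist_halfPlaneToUpperHalfPlane_lt θ t hz₀ _).trans ?_
  rw [cosh_log_one_add_div_one_sub hr hr1, sinh_log_one_add_div_one_sub hr hr1]
  congr 1
  · have hr2 : 1 - r ^ 2 ≠ 0 := by nlinarith
    rw [show (1 + r ^ 2) / (1 - r ^ 2) - 1 = 2 * r ^ 2 / (1 - r ^ 2) by field_simp; ring]
    push_cast
    ring
  · ring
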